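/- arXiv:2401.04819 — 2 statements merged into one kernel-verified Lean document; each statement's English description precedes it below -/
import Mathlib

section
/- More generally, if X is a closed subspace of a normed space Y, then every extreme point of the closed unit ball of X* is the restriction to X of some extreme point of the closed unit ball of Y*. -/
/-!
Restricting functionals is a weak*-continuous linear map from the weak*-compact unit ball of `Y*`
onto the unit ball of `X*` (onto by Hahn–Banach). For a continuous affine map on a compact set,
the fibre over an extreme point of the image is a compact extreme subset, so by Krein–Milman it
contains an extreme point, which is then extreme in the whole ball.
-/

namespace WeakDual

instance instLocallyConvexSpace {E : Type*} [AddCommGroup E] [TopologicalSpace E]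
    [Module ℝ E] : LocallyConvexSpace ℝ (WeakDual ℝ E) :=
  WeakBilin.locallyConvexSpace

section dualMap

variable {𝕜 E F : Type*} [CommSemiring 𝕜] [TopologicalSpace 𝕜] [ContinuousAdd 𝕜]
  [ContinuousConstSMul 𝕜 𝕜] [AddCommMonoid E] [TopologicalSpace E] [Module 𝕜 E]
  [AddCommMonoid F] [TopologicalSpace F] [Module 𝕜 F]

noncomputable def dualMap (T : F →L[𝕜] E) : WeakDual 𝕜 E →L[𝕜] WeakDual 𝕜 F where
  toFun g := StrongDual.toWeakDual ((toStrongDual g).comp T)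
  map_add' _ _ := rfl
  map_smul' _ _ := rfl
  cont := continuous_of_continuous_eval fun x => eval_continuous (T x)

end dualMap

theorem image_dualMap_subtypeL_closedBall {𝕜 E : Type*} [NontriviallyNormedField 𝕜]
    [IsRCLikeNormedField 𝕜] [SeminormedAddCommGroup E] [NormedSpace 𝕜 E]
    (p : Subspace 𝕜 E) (r : ℝ) :
    dualMap p.subtypeL '' (toStrongDual ⁻¹' Metric.closedBall 0 r) =
      toStrongDual ⁻¹' Metric.closedBall 0 r := by
  ext φ
  simp only [Set.mem_image, Set.mem_preimage, mem_closedBall_zero_iff]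
  constructor
  · rintro ⟨g, hg, rfl⟩
    calc ‖(toStrongDual g).comp p.subtypeL‖ ≤ ‖toStrongDual g‖ * ‖p.subtypeL‖ :=
          (toStrongDual g).opNorm_comp_le _
      _ ≤ ‖toStrongDual g‖ := mul_le_of_le_one_right (norm_nonneg _) p.norm_subtypeL_le
      _ ≤ r := hg
  · intro hφ
    obtain ⟨g, hgφ, hg⟩ := exists_extension_norm_eq p (toStrongDual φ)
    refine ⟨StrongDual.toWeakDual g, by simpa [hg] using hφ, ?_⟩
    exact DFunLike.ext _ _ hgφ

theorem extremePoints_preimage_toStrongDual {E : Type*} [SeminormedAddCommGroup E]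
    [NormedSpace ℝ E] (s : Set (StrongDual ℝ E)) :
    Set.extremePoints ℝ (toStrongDual ⁻¹' s) = toStrongDual ⁻¹' Set.extremePoints ℝ s := by
  rw [← LinearEquiv.image_symm_eq_preimage, ← LinearEquiv.image_symm_eq_preimage,
    image_extremePoints]

end WeakDual

open WeakDual in
theorem stmt2_general (Y : Type*) [NormedAddCommGroup Y] [NormedSpace ℝ Y]
    (X : Submodule ℝ Y)
    (f : X →L[ℝ] ℝ)
    (hf : f ∈ Set.extremePoints ℝ (Metric.closedBall (0 : X →L[ℝ] ℝ) 1)) :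
    ∃ g : Y →L[ℝ] ℝ, g ∈ Set.extremePoints ℝ (Metric.closedBall (0 : Y →L[ℝ] ℝ) 1) ∧
      f = g.comp X.subtypeL := by
  have hf' : StrongDual.toWeakDual f ∈ Set.extremePoints ℝ
      (dualMap X.subtypeL '' (toStrongDual ⁻¹' Metric.closedBall 0 1)) := by
    rwa [image_dualMap_subtypeL_closedBall, extremePoints_preimage_toStrongDual]
  obtain ⟨g, hg, hgf⟩ := surjOn_extremePoints_image (dualMap X.subtypeL).toContinuousAffineMap
    (isCompact_closedBall 0 1) hf'
  rw [extremePoints_preimage_toStrongDual] at hg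
  exact ⟨toStrongDual g, hg, congrArg toStrongDual hgf.symm⟩

/-- if `X` is a closed subspace of a normed space `Y`, then every extreme
point of the closed unit ball of `X*` is the restriction to `X` of some extreme point
of the closed unit ball of `Y*`. -/
theorem stmt2 (Y : Type*) [NormedAddCommGroup Y] [NormedSpace ℝ Y]
    (X : Submodule ℝ Y) (hX : IsClosed (X : Set Y))
    (f : X →L[ℝ] ℝ)
    (hf : f ∈ Set.extremePoints ℝ (Metric.closedBall (0 : X →L[ℝ] ℝ) 1)) :
    ∃ g : Y →L[ℝ] ℝ, g ∈ Set.extremePoints ℝ (Metric.closedBall (0 : Y →L[ℝ] ℝ) 1) ∧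
      f = g.comp X.subtypeL :=
  stmt2_general Y X f hf
end

section
/- For all α, β ∈ ℓ¹ with ‖α‖₁ ≤ 1 and ‖β‖₁ < ‖α‖₁, the space W_α contains a closed subspace isometric to W_β. -/
open Filter Topology

noncomputable section

/-- `x` belongs to the hyperplane `W_α` of the space `c` of convergent real sequences:
`x` converges and its limit equals `∑' i, α i * x i` (sequences are 0-indexed). -/
def MemW (α x : ℕ → ℝ) : Prop :=
  (∃ l : ℝ, Tendsto x atTop (𝓝 l)) ∧ Tendsto x atTop (𝓝 (∑' i, α i * x i))

/-- The sup norm of a real sequence. -/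
def supNorm (x : ℕ → ℝ) : ℝ := ⨆ i, |x i|

/-- The element `r·e₁* = (r,0,0,…)` of `ℓ¹`. -/
def rSeq (r : ℝ) : ℕ → ℝ := fun i => if i = 0 then r else 0

/-!
Since `‖β‖₁ < ‖α‖₁`, some `n` has `S := ∑_{i<n} |α i| ≥ (‖α‖₁ + ‖β‖₁) / 2`; then
`δ i := β i - α (i + n)` satisfies `‖δ‖₁ ≤ ‖β‖₁ + (‖α‖₁ - S) ≤ S`. Send `x` to
`Tx := (sign α₀ · t / S, …, sign αₙ₋₁ · t / S, x₀, x₁, …)` with `t = ∑ δₖ xₖ`. This is linear, has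
the same limit as `x`, and `∑ αᵢ (Tx)ᵢ = t + ∑ αᵢ₊ₙ xᵢ = ∑ βᵢ xᵢ = lim x`, so `Tx` lies in
`W_α`. As `|t| ≤ ‖δ‖₁ ‖x‖_∞ ≤ S ‖x‖_∞`, the first `n` entries do not raise the sup norm.
-/

lemma abs_le_supNorm {x : ℕ → ℝ} (hx : BddAbove (Set.range fun i => |x i|)) (i : ℕ) :
    |x i| ≤ supNorm x :=
  le_ciSup hx i

lemma MemW.bddAbove {β x : ℕ → ℝ} (hx : MemW β x) : BddAbove (Set.range fun i => |x i|) :=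
  let ⟨⟨_, hl⟩, _⟩ := hx
  hl.abs.bddAbove_range

lemma summable_mul_of_abs_le {g x : ℕ → ℝ} (hg : Summable fun i => |g i|) {M : ℝ}
    (hx : ∀ i, |x i| ≤ M) : Summable fun i => g i * x i :=
  .of_norm_bounded (hg.mul_right M) fun i => by
    rw [Real.norm_eq_abs, abs_mul]
    exact mul_le_mul_of_nonneg_left (hx i) (abs_nonneg _)

lemma abs_tsum_mul_le {g x : ℕ → ℝ} (hg : Summable fun i => |g i|) {M : ℝ}
    (hx : ∀ i, |x i| ≤ M) : |∑' i, g i * x i| ≤ (∑' i, |g i|) * M :=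
  tsum_of_norm_bounded (hg.hasSum.mul_right M) fun i => by
    rw [Real.norm_eq_abs, abs_mul]
    exact mul_le_mul_of_nonneg_left (hx i) (abs_nonneg _)

lemma tsum_mul_add_of_abs_le {g x y : ℕ → ℝ} (hg : Summable fun i => |g i|) {M N : ℝ}
    (hx : ∀ i, |x i| ≤ M) (hy : ∀ i, |y i| ≤ N) :
    ∑' i, g i * (x i + y i) = ∑' i, g i * x i + ∑' i, g i * y i := by
  simp only [mul_add]
  exact (summable_mul_of_abs_le hg hx).tsum_add (summable_mul_of_abs_le hg hy)

def prepend (n : ℕ) (c x : ℕ → ℝ) : ℕ → ℝ := fun i => if i < n then c i else x (i - n)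

section prepend

variable {n : ℕ} {c x : ℕ → ℝ}

lemma prepend_of_lt {i : ℕ} (hi : i < n) : prepend n c x i = c i := if_pos hi

@[simp]
lemma prepend_add (i : ℕ) : prepend n c x (i + n) = x i := by
  simp [prepend]

lemma prepend_add_prepend (c' x' : ℕ → ℝ) :
    prepend n c x + prepend n c' x' = prepend n (c + c') (x + x') := by
  ext i
  simp only [Pi.add_apply, prepend]
  split_ifs <;> rfl

lemma smul_prepend (a : ℝ) : a • prepend n c x = prepend n (a • c) (a • x) := by
  ext i
  simp only [Pi.smul_apply, prepend]
  split_ifs <;> rfl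

lemma Filter.Tendsto.prepend {l : ℝ} (hx : Tendsto x atTop (𝓝 l)) :
    Tendsto (prepend n c x) atTop (𝓝 l) :=
  (tendsto_add_atTop_iff_nat n).1 (by simpa only [prepend_add] using hx)

lemma abs_prepend_le {M : ℝ} (hc : ∀ i < n, |c i| ≤ M) (hx : ∀ i, |x i| ≤ M) (i : ℕ) :
    |prepend n c x i| ≤ M := by
  unfold prepend
  split_ifs with hi
  exacts [hc i hi, hx _]

lemma supNorm_prepend (hx : BddAbove (Set.range fun i => |x i|))
    (hc : ∀ i < n, |c i| ≤ supNorm x) : supNorm (prepend n c x) = supNorm x := by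
  have hle := abs_prepend_le hc (abs_le_supNorm hx)
  refine le_antisymm (ciSup_le hle) (ciSup_le fun i => ?_)
  calc |x i| = |prepend n c x (i + n)| := by rw [prepend_add]
    _ ≤ supNorm (prepend n c x) := abs_le_supNorm ⟨_, Set.forall_mem_range.2 hle⟩ _

lemma tsum_mul_prepend {g : ℕ → ℝ} (hg : Summable fun i => g i * prepend n c x i) :
    ∑' i, g i * prepend n c x i =
      ∑ i ∈ Finset.range n, g i * c i + ∑' i, g (i + n) * x i := by
  rw [← hg.sum_add_tsum_nat_add n]
  congr 1
  · exact Finset.sum_congr rfl fun i hi => by rw [prepend_of_lt (Finset.mem_range.1 hi)]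
  · simp only [prepend_add]

end prepend

lemma exists_tsum_abs_sub_shift_le_sum_range {α β : ℕ → ℝ} (hα : Summable fun i => |α i|)
    (hβ : Summable fun i => |β i|) (hβα : ∑' i, |β i| < ∑' i, |α i|) :
    ∃ n, 0 < ∑ i ∈ Finset.range n, |α i| ∧ Summable (fun i => |β i - α (i + n)|) ∧
      ∑' i, |β i - α (i + n)| ≤ ∑ i ∈ Finset.range n, |α i| := by
  obtain ⟨n, hn⟩ : ∃ n, (∑' i, |α i| + ∑' i, |β i|) / 2 < ∑ i ∈ Finset.range n, |α i| :=
    (hα.hasSum.tendsto_sum_nat.eventually (eventually_gt_nhds (by linarith))).exists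
  have hβ0 : 0 ≤ ∑' i, |β i| := tsum_nonneg fun i => abs_nonneg _
  have htail : Summable fun i => |α (i + n)| := (summable_nat_add_iff n).2 hα
  have hδ : Summable fun i => |β i - α (i + n)| :=
    .of_norm_bounded (hβ.add htail) fun i => (abs_abs _).trans_le (abs_sub _ _)
  refine ⟨n, by linarith, hδ, ?_⟩
  calc ∑' i, |β i - α (i + n)| ≤ ∑' i, (|β i| + |α (i + n)|) :=
        hδ.tsum_le_tsum (fun i => abs_sub _ _) (hβ.add htail)
    _ = ∑' i, |β i| + (∑' i, |α i| - ∑ i ∈ Finset.range n, |α i|) := by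
        rw [hβ.tsum_add htail, ← hα.sum_add_tsum_nat_add n, add_sub_cancel_left]
    _ ≤ ∑ i ∈ Finset.range n, |α i| := by linarith

def embedW (α δ : ℕ → ℝ) (n : ℕ) (x : ℕ → ℝ) : ℕ → ℝ :=
  prepend n (fun i => SignType.sign (α i) * (∑' k, δ k * x k) / ∑ j ∈ Finset.range n, |α j|) x

section embedW

variable {α δ : ℕ → ℝ} {n : ℕ}

lemma memW_embedW (hα : Summable fun i => |α i|) (hδ : Summable fun i => |δ i|)
    (hS : 0 < ∑ i ∈ Finset.range n, |α i|) {x : ℕ → ℝ}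
    (hx : MemW (fun i => δ i + α (i + n)) x) : MemW α (embedW α δ n x) := by
  obtain ⟨⟨l, hl⟩, hlim⟩ := hx
  set S := ∑ i ∈ Finset.range n, |α i|
  set D := ∑' k, δ k * x k
  have hT : Tendsto (embedW α δ n x) atTop (𝓝 l) := hl.prepend
  have hxM := abs_le_supNorm hl.abs.bddAbove_range
  have hTM := abs_le_supNorm hT.abs.bddAbove_range
  have hhead : ∑ i ∈ Finset.range n, α i * (SignType.sign (α i) * D / S) = D := by
    simp_rw [mul_div_assoc, ← mul_assoc, self_mul_sign, ← Finset.sum_mul]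
    exact mul_div_cancel₀ D hS.ne'
  have htail : ∑' i, α (i + n) * x i = ∑' i, (δ i + α (i + n)) * x i - D := by
    simp_rw [add_mul]
    rw [(summable_mul_of_abs_le hδ hxM).tsum_add
      (summable_mul_of_abs_le ((summable_nat_add_iff n).2 hα) hxM), add_sub_cancel_left]
  have hsum : ∑' i, α i * embedW α δ n x i = ∑' i, (δ i + α (i + n)) * x i := by
    rw [embedW, tsum_mul_prepend (summable_mul_of_abs_le hα hTM), hhead, htail,
      add_sub_cancel]
  exact ⟨⟨l, hT⟩, hsum ▸ hlim.prepend⟩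

lemma supNorm_embedW (hδ : Summable fun i => |δ i|)
    (hδS : ∑' i, |δ i| ≤ ∑ i ∈ Finset.range n, |α i|) {x : ℕ → ℝ}
    (hx : BddAbove (Set.range fun i => |x i|)) : supNorm (embedW α δ n x) = supNorm x := by
  have hxM := abs_le_supNorm hx
  have hM : 0 ≤ supNorm x := (abs_nonneg _).trans (hxM 0)
  have hS : 0 ≤ ∑ i ∈ Finset.range n, |α i| := Finset.sum_nonneg fun i _ => abs_nonneg _
  have hD : |∑' k, δ k * x k| ≤ supNorm x * ∑ i ∈ Finset.range n, |α i| :=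
    (abs_tsum_mul_le hδ hxM).trans (by rw [mul_comm]; gcongr)
  refine supNorm_prepend hx fun i _ => ?_
  rw [abs_div, abs_mul, abs_of_nonneg hS]
  refine div_le_of_le_mul₀ hS hM ((mul_le_of_le_one_left (abs_nonneg _) ?_).trans hD)
  cases SignType.sign (α i) <;> simp

lemma embedW_add (hδ : Summable fun i => |δ i|) {x y : ℕ → ℝ}
    (hx : BddAbove (Set.range fun i => |x i|)) (hy : BddAbove (Set.range fun i => |y i|)) :
    embedW α δ n (x + y) = embedW α δ n x + embedW α δ n y := by
  rw [embedW, embedW, embedW, prepend_add_prepend]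
  congr 1
  ext i
  simp only [Pi.add_apply,
    tsum_mul_add_of_abs_le hδ (abs_le_supNorm hx) (abs_le_supNorm hy)]
  ring

lemma embedW_smul (a : ℝ) (x : ℕ → ℝ) : embedW α δ n (a • x) = a • embedW α δ n x := by
  rw [embedW, embedW, smul_prepend]
  congr 1
  ext i
  simp only [Pi.smul_apply, smul_eq_mul, mul_left_comm _ a, tsum_mul_left]
  ring

end embedW

theorem stmt7_general (α β : ℕ → ℝ) (hα : Summable fun i => |α i|) (hβ : Summable fun i => |β i|)
    (hβα : ∑' i, |β i| < ∑' i, |α i|) :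
    ∃ T : (ℕ → ℝ) → (ℕ → ℝ),
      (∀ x, MemW β x → MemW α (T x) ∧ supNorm (T x) = supNorm x) ∧
      (∀ x y, MemW β x → MemW β y → T (x + y) = T x + T y) ∧
      (∀ (a : ℝ) (x : ℕ → ℝ), MemW β x → T (a • x) = a • T x) := by
  obtain ⟨n, hS, hδ, hδS⟩ := exists_tsum_abs_sub_shift_le_sum_range hα hβ hβα
  have hβδ : β = fun i => (β i - α (i + n)) + α (i + n) :=
    funext fun i => (sub_add_cancel _ _).symm
  refine ⟨embedW α (fun i => β i - α (i + n)) n, fun x hx => ⟨?_, ?_⟩,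
    fun x y hx hy => embedW_add hδ hx.bddAbove hy.bddAbove, fun a x _ => embedW_smul a x⟩
  · exact memW_embedW hα hδ hS (hβδ ▸ hx)
  · exact supNorm_embedW hδ hδS hx.bddAbove

/-- for all `α, β ∈ ℓ¹` with `‖α‖₁ ≤ 1` and `‖β‖₁ < ‖α‖₁`, the space
`W_α` contains a (closed) subspace isometric to `W_β`: there is a map, linear and
norm-preserving on `W_β`, sending `W_β` into `W_α`. -/
theorem stmt7 (α β : ℕ → ℝ) (hα : Summable fun i => |α i|) (hβ : Summable fun i => |β i|)
    (hα1 : ∑' i, |α i| ≤ 1) (hβα : ∑' i, |β i| < ∑' i, |α i|) :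
    ∃ T : (ℕ → ℝ) → (ℕ → ℝ),
      (∀ x, MemW β x → MemW α (T x) ∧ supNorm (T x) = supNorm x) ∧
      (∀ x y, MemW β x → MemW β y → T (x + y) = T x + T y) ∧
      (∀ (a : ℝ) (x : ℕ → ℝ), MemW β x → T (a • x) = a • T x) :=
  stmt7_general α β hα hβ hβα
end
end
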